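/- Expressive completeness of COD over generalized causal teams: a nonempty class K of generalized causal teams over a finite signature σ is definable by a COD-formula (equivalently, by a CO_⤘-formula) if and only if K is causally downward closed and closed under equivalence ≈ (equivalently, closed under the relation ≽). -/

import Mathlib

namespace CausalTeams

attribute [local instance] Classical.propDecidable

/-- A system of functions over a signature: each endogenous variable `V ∈ En` has a set
of parents `PA V` (not containing `V`) and a function computing its value, which depends
only on the values of its parents. -/
structure FuncSystem (Var : Type) (Val : Var → Type) : Type where
  En : Set Var
  PA : Var → Set Var
  pa_ne : ∀ V, V ∉ PA V
  fn : ∀ V, (∀ W, Val W) → Val V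
  dep_only : ∀ V (s t : ∀ W, Val W), (∀ W ∈ PA V, s W = t W) → fn V s = fn V t

variable {Var : Type} {Val : Var → Type}

/-- Assignments of values to the variables. -/
abbrev Assign (Var : Type) (Val : Var → Type) : Type := ∀ V, Val V

/-- An assignment is compatible with a system of functions if each endogenous variable's
value is the one generated by its function. -/
def Compat (s : Assign Var Val) (F : FuncSystem Var Val) : Prop :=
  ∀ V ∈ F.En, s V = F.fn V s

/-- The endogenous variables whose generating function is constant. -/
def Cn (F : FuncSystem Var Val) : Set Var :=
  {V | V ∈ F.En ∧ ∀ s t : Assign Var Val, F.fn V s = F.fn V t}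

/-- The functions for `V` in `F` and `G` are equivalent up to dummy arguments: they agree
whenever their arguments agree on the common parents of `V`. -/
def fnEquiv (F G : FuncSystem Var Val) (V : Var) : Prop :=
  ∀ s t : Assign Var Val,
    (∀ W, W ∈ F.PA V → W ∈ G.PA V → s W = t W) → F.fn V s = G.fn V t

/-- Equivalence of systems of functions up to dummy arguments. -/
def sysEquiv (F G : FuncSystem Var Val) : Prop :=
  F.En \ Cn F = G.En \ Cn G ∧ ∀ V ∈ F.En \ Cn F, fnEquiv F G V

/-- The edge relation of the causal graph of `F`. -/
def Edge (F : FuncSystem Var Val) (W V : Var) : Prop := V ∈ F.En ∧ W ∈ F.PA V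

/-- `F` is recursive: its causal graph is acyclic. -/
def RecursiveSys (F : FuncSystem Var Val) : Prop :=
  ∀ V, ¬ Relation.TransGen (Edge F) V V

/-- The system of functions resulting from the intervention `do(X = x)`: the variables of
`X` are made exogenous; parents and functions of the remaining endogenous variables are kept. -/
def restrictSys (F : FuncSystem Var Val) (X : Finset Var) : FuncSystem Var Val where
  En := F.En \ ↑X
  PA := F.PA
  pa_ne := F.pa_ne
  fn := F.fn
  dep_only := F.dep_only

section InterveneAssign
variable [DecidableEq Var] [Fintype Var]

/-- One step of recomputation after the intervention `do(X = x)`. -/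
noncomputable def stepFn (F : FuncSystem Var Val) (X : Finset Var) (x : Assign Var Val)
    (s : Assign Var Val) : Assign Var Val :=
  fun V => if V ∈ X then x V else if V ∈ F.En then F.fn V s else s V

/-- The result of the intervention `do(X = x)` on the assignment `s`
(for recursive systems, iterating the recomputation step sufficiently many times
reaches the fixed point). -/
noncomputable def interveneAssign (F : FuncSystem Var Val) (X : Finset Var) (x : Assign Var Val)
    (s : Assign Var Val) : Assign Var Val :=
  (stepFn F X x)^[Fintype.card Var + 1] s

end InterveneAssign

/-- Formulas: equality atoms `V = v`, dependence atoms `=(Xs; Y)`, negation, conjunction,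
tensor disjunction, global disjunction, and interventionist counterfactuals
`X = x □→ φ` (the antecedent is a finite set of variables together with the values
imposed on them, read off from an assignment; such antecedents are always consistent). -/
inductive Formula (Var : Type) (Val : Var → Type) : Type where
  | eq : (V : Var) → Val V → Formula Var Val
  | dep : List Var → Var → Formula Var Val
  | neg : Formula Var Val → Formula Var Val
  | and : Formula Var Val → Formula Var Val → Formula Var Val
  | or : Formula Var Val → Formula Var Val → Formula Var Val
  | gor : Formula Var Val → Formula Var Val → Formula Var Val
  | cf : Finset Var → Assign Var Val → Formula Var Val → Formula Var Val

/-- CO-formulas: no dependence atoms, no global disjunction. -/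
def IsCO : Formula Var Val → Prop
  | .eq _ _ => True
  | .dep _ _ => False
  | .neg φ => IsCO φ
  | .and φ ψ => IsCO φ ∧ IsCO ψ
  | .or φ ψ => IsCO φ ∧ IsCO ψ
  | .gor _ _ => False
  | .cf _ _ φ => IsCO φ

/-- COD-formulas: CO plus dependence atoms; negation applies only to CO-formulas. -/
def IsCOD : Formula Var Val → Prop
  | .eq _ _ => True
  | .dep _ _ => True
  | .neg φ => IsCO φ
  | .and φ ψ => IsCOD φ ∧ IsCOD ψ
  | .or φ ψ => IsCOD φ ∧ IsCOD ψ
  | .gor _ _ => False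
  | .cf _ _ φ => IsCOD φ

/-- CO_⤘-formulas: CO plus global disjunction; negation applies only to CO-formulas. -/
def IsCOglobal : Formula Var Val → Prop
  | .eq _ _ => True
  | .dep _ _ => False
  | .neg φ => IsCO φ
  | .and φ ψ => IsCOglobal φ ∧ IsCOglobal ψ
  | .or φ ψ => IsCOglobal φ ∧ IsCOglobal ψ
  | .gor φ ψ => IsCOglobal φ ∧ IsCOglobal ψ
  | .cf _ _ φ => IsCOglobal φ

/-- Counterfactual-free formulas: no occurrence of `□→`. -/
def CFFree : Formula Var Val → Prop
  | .eq _ _ => True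
  | .dep _ _ => True
  | .neg φ => CFFree φ
  | .and φ ψ => CFFree φ ∧ CFFree ψ
  | .or φ ψ => CFFree φ ∧ CFFree ψ
  | .gor φ ψ => CFFree φ ∧ CFFree ψ
  | .cf _ _ _ => False

section Semantics
variable [DecidableEq Var] [Fintype Var]

/-- Causal team semantics: satisfaction of a formula by a team of assignments together
with a system of functions. -/
noncomputable def csat : FuncSystem Var Val → Set (Assign Var Val) → Formula Var Val → Prop
  | _, T, .eq V v => ∀ s ∈ T, s V = v
  | _, T, .dep Xs Y => ∀ s ∈ T, ∀ t ∈ T, (∀ W ∈ Xs, s W = t W) → s Y = t Y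
  | F, T, .neg φ => ∀ s ∈ T, ¬ csat F {s} φ
  | F, T, .and φ ψ => csat F T φ ∧ csat F T ψ
  | F, T, .or φ ψ => ∃ T₁ T₂, T₁ ∪ T₂ = T ∧ csat F T₁ φ ∧ csat F T₂ ψ
  | F, T, .gor φ ψ => csat F T φ ∨ csat F T ψ
  | F, T, .cf X x φ => csat (restrictSys F X) (interveneAssign F X x '' T) φ

end Semantics

/-- Generalized causal teams: sets of pairs of an assignment and a system of functions. -/
abbrev GCT (Var : Type) (Val : Var → Type) : Type :=
  Set (Assign Var Val × FuncSystem Var Val)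

/-- The team component of a generalized causal team. -/
def teamOf (T : GCT Var Val) : Set (Assign Var Val) := Prod.fst '' T

/-- A genuine (recursive) generalized causal team: all pairs are compatible and all
function components are recursive. -/
def IsGCT (T : GCT Var Val) : Prop := ∀ p ∈ T, Compat p.1 p.2 ∧ RecursiveSys p.2

section GSemantics
variable [DecidableEq Var] [Fintype Var]

/-- Pointwise intervention on a generalized causal team. -/
noncomputable def gIntervene (T : GCT Var Val) (X : Finset Var) (x : Assign Var Val) : GCT Var Val :=
  (fun p => (interveneAssign p.2 X x p.1, restrictSys p.2 X)) '' T

/-- Generalized causal team semantics. -/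
noncomputable def gsat : GCT Var Val → Formula Var Val → Prop
  | T, .eq V v => ∀ p ∈ T, p.1 V = v
  | T, .dep Xs Y => ∀ p ∈ T, ∀ q ∈ T, (∀ W ∈ Xs, p.1 W = q.1 W) → p.1 Y = q.1 Y
  | T, .neg φ => ∀ p ∈ T, ¬ gsat {p} φ
  | T, .and φ ψ => gsat T φ ∧ gsat T ψ
  | T, .or φ ψ => ∃ T₁ T₂, T₁ ∪ T₂ = T ∧ gsat T₁ φ ∧ gsat T₂ ψ
  | T, .gor φ ψ => gsat T φ ∨ gsat T ψ
  | T, .cf X x φ => gsat (gIntervene T X x) φ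

end GSemantics

/-- Equivalence of generalized causal teams: for each system of functions `F`, the
assignments occurring together with a function component `∼`-similar to `F` are the same. -/
def gctEquiv (S T : GCT Var Val) : Prop :=
  ∀ F : FuncSystem Var Val,
    {s | ∃ G, (s, G) ∈ S ∧ sysEquiv G F} = {s | ∃ G, (s, G) ∈ T ∧ sysEquiv G F}

/-- `S ≼ T` iff `S ≈ R ⊆ T` for some `R`. -/
def sle (S T : GCT Var Val) : Prop := ∃ R : GCT Var Val, gctEquiv S R ∧ R ⊆ T

/-- The generalized causal team generated by a causal team. -/
def toGCT (team : Set (Assign Var Val)) (F : FuncSystem Var Val) : GCT Var Val :=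
  (fun s => (s, F)) '' team

/-- Equivalence of elements of generalized causal teams: same assignment and
`∼`-similar function components. -/
def pairEquiv (p q : Assign Var Val × FuncSystem Var Val) : Prop :=
  p.1 = q.1 ∧ sysEquiv p.2 q.2

/-- The quotient `T/≈` has at most `k` elements: `T` is covered by `k` representatives. -/
def quotCardLE (T : GCT Var Val) (k : ℕ) : Prop :=
  ∃ R : Finset (Assign Var Val × FuncSystem Var Val),
    R.card ≤ k ∧ ∀ p ∈ T, ∃ q ∈ R, pairEquiv p q

section Entailment
variable [DecidableEq Var] [Fintype Var]

/-- Entailment over (recursive) generalized causal teams. -/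
def gEntails (Δ : Set (Formula Var Val)) (α : Formula Var Val) : Prop :=
  ∀ T : GCT Var Val, IsGCT T → (∀ γ ∈ Δ, gsat T γ) → gsat T α

/-- Entailment over (recursive) causal teams. -/
def cEntails (Δ : Set (Formula Var Val)) (α : Formula Var Val) : Prop :=
  ∀ (F : FuncSystem Var Val) (team : Set (Assign Var Val)),
    RecursiveSys F → (∀ s ∈ team, Compat s F) →
    (∀ γ ∈ Δ, csat F team γ) → csat F team α

/-- Causal incompatibility of two formulas. -/
def Incompatible (φ ψ : Formula Var Val) : Prop :=
  ∀ (F G : FuncSystem Var Val) (S T : Set (Assign Var Val)),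
    S.Nonempty → T.Nonempty → RecursiveSys F → RecursiveSys G →
    (∀ s ∈ S, Compat s F) → (∀ t ∈ T, Compat t G) →
    csat F S φ → csat G T ψ → ¬ sysEquiv F G

end Entailment

section FormulaHelpers
variable [DecidableEq Var] [Fintype Var] [Nonempty Var]
  [∀ V, Fintype (Val V)] [∀ V, Nonempty (Val V)]

/-- The falsum formula `⊥ := V = v ∧ V ≠ v`. -/
noncomputable def falsum : Formula Var Val :=
  let V := Classical.arbitrary Var
  Formula.and (Formula.eq V (Classical.arbitrary (Val V)))
    (Formula.neg (Formula.eq V (Classical.arbitrary (Val V))))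

/-- Finite conjunction (the empty conjunction is `¬⊥`). -/
noncomputable def bigAnd : List (Formula Var Val) → Formula Var Val
  | [] => Formula.neg falsum
  | [φ] => φ
  | φ :: l => Formula.and φ (bigAnd l)

/-- Finite tensor disjunction (the empty disjunction is `⊥`). -/
noncomputable def bigOr : List (Formula Var Val) → Formula Var Val
  | [] => falsum
  | [φ] => φ
  | φ :: l => Formula.or φ (bigOr l)

/-- Finite global disjunction (the empty disjunction is `⊥`). -/
noncomputable def bigGor : List (Formula Var Val) → Formula Var Val
  | [] => falsum
  | [φ] => φ
  | φ :: l => Formula.gor φ (bigGor l)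

/-- The conjunction `⋀_{V ∈ Dom} V = s(V)` describing the assignment `s`. -/
noncomputable def eqConj (s : Assign Var Val) : Formula Var Val :=
  bigAnd ((Finset.univ : Finset Var).toList.map fun V => Formula.eq V (s V))

/-- `Θ^A := ⋁_{s ∈ A} ⋀_{V ∈ Dom} V = s(V)`. -/
noncomputable def Theta (A : Finset (Assign Var Val)) : Formula Var Val :=
  bigOr (A.toList.map eqConj)

/-- The constancy atom `=(V)`. -/
def conAtom (V : Var) : Formula Var Val := Formula.dep [] V

/-- `μ := ⋀_{V ∈ Dom} ⋀_{w} (W_V = w □→ =(V))` where `W_V = Dom \ {V}`. -/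
noncomputable def muForm : Formula Var Val :=
  bigAnd ((Finset.univ : Finset Var).toList.map fun V =>
    bigAnd (((Finset.univ : Finset (Assign Var Val))).toList.map fun w =>
      Formula.cf ((Finset.univ : Finset Var).erase V) w (conAtom V)))

/-- `χ := μ ∧ ⋀_{V ∈ Dom} =(V)`. -/
noncomputable def chiForm : Formula Var Val :=
  Formula.and muForm (bigAnd ((Finset.univ : Finset Var).toList.map conAtom))

/-- `χ_k`: the `k`-fold tensor disjunction of `χ` (with `χ_0 := ⊥`). -/
noncomputable def chiK : ℕ → Formula Var Val
  | 0 => falsum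
  | 1 => chiForm
  | n + 2 => Formula.or chiForm (chiK (n + 1))

end FormulaHelpers

/-!
Satisfaction of every formula is preserved under `≼`, by induction on the formula; for `□→`
this rests on interventions respecting `∼` on compatible assignments. Hence definable classes
are downward closed and closed under `≈`.

Conversely, an element `(s, F)` is determined up to `≈` by its signature: the values `s(V)`
together with the values of each `V` after intervening on all other variables. There are
finitely many signatures, and a CO-formula `δ_σ` says that the signature is `σ`. A class `K` closed
under `⊆` and `≈` is then cut out by the conditions "the signatures of the team do not cover
`B`", for the finite sets `B` of signatures covered by no member of `K`. Such a condition reads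
`χ ⊗ ⋯ ⊗ χ ⊗ ⋀_{σ ∈ B} ¬δ_σ` with `|B| - 1` copies of `χ`, where `χ` says that the
signature is constant; `χ` is built from the constancy atoms `=(V)` in COD, and from
`⤘_v V = v` in `CO_⤘`.
-/

section Systems
variable {F G H : FuncSystem Var Val}

theorem fnEquiv_iff {V : Var} :
    fnEquiv F G V ↔ F.fn V = G.fn V := by
  refine ⟨fun h => funext fun w => h w w fun _ _ _ => rfl, fun h s t hst => ?_⟩
  -- splice `s` on the parents of `V` in `F` with `t` elsewhere
  let u : Assign Var Val := fun W => if W ∈ F.PA V then s W else t W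
  calc F.fn V s = F.fn V u := F.dep_only V s u fun W hW => by simp [u, hW]
    _ = G.fn V u := by rw [h]
    _ = G.fn V t := G.dep_only V u t fun W hW => by
      by_cases hF : W ∈ F.PA V
      · simpa [u, hF] using hst W hF hW
      · simp [u, hF]

theorem sysEquiv_iff :
    sysEquiv F G ↔ F.En \ Cn F = G.En \ Cn G ∧ ∀ V ∈ F.En \ Cn F, F.fn V = G.fn V := by
  simp only [sysEquiv, fnEquiv_iff]

theorem sysEquiv_refl (F : FuncSystem Var Val) : sysEquiv F F :=
  sysEquiv_iff.2 ⟨rfl, fun _ _ => rfl⟩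

theorem sysEquiv.symm (h : sysEquiv F G) : sysEquiv G F := by
  rw [sysEquiv_iff] at h ⊢
  exact ⟨h.1.symm, fun V hV => (h.2 V (h.1 ▸ hV)).symm⟩

theorem sysEquiv.trans (h₁ : sysEquiv F G) (h₂ : sysEquiv G H) :
    sysEquiv F H := by
  rw [sysEquiv_iff] at h₁ h₂ ⊢
  exact ⟨h₁.1.trans h₂.1, fun V hV => (h₁.2 V hV).trans (h₂.2 V (h₁.1 ▸ hV))⟩

theorem pairEquiv.symm {p q : Assign Var Val × FuncSystem Var Val} (h : pairEquiv p q) :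
    pairEquiv q p :=
  ⟨h.1.symm, h.2.symm⟩

theorem restrictSys_En_diff_Cn (F : FuncSystem Var Val) (X : Finset Var) :
    (restrictSys F X).En \ Cn (restrictSys F X) = (F.En \ Cn F) \ ↑X := by
  ext V
  simp only [restrictSys, Cn, Set.mem_sdiff, Set.mem_ofPred_eq]
  tauto

theorem sysEquiv.restrictSys (h : sysEquiv F G) (X : Finset Var) :
    sysEquiv (restrictSys F X) (restrictSys G X) := by
  rw [sysEquiv_iff] at h ⊢
  refine ⟨by simp only [restrictSys_En_diff_Cn, h.1], fun V hV => h.2 V ?_⟩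
  rw [restrictSys_En_diff_Cn] at hV
  exact hV.1

theorem RecursiveSys.restrictSys (hF : RecursiveSys F) (X : Finset Var) :
    RecursiveSys (restrictSys F X) := fun V hV =>
  hF V (Relation.TransGen.mono (fun _ _ h => ⟨h.1.1, h.2⟩) V V hV)

noncomputable def rank (F : FuncSystem Var Val) (V : Var) : ℕ :=
  {W | Relation.TransGen (Edge F) W V}.ncard

theorem rank_lt_rank [Finite Var] (hF : RecursiveSys F) {W V : Var} (h : Edge F W V) :
    rank F W < rank F V :=
  Set.ncard_lt_ncard ⟨fun _ ha => ha.tail h, fun hsub => hF W (hsub (.single h))⟩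

/-- The value `V` would take if all other variables were set according to `w`. -/
noncomputable def response (F : FuncSystem Var Val) (s : Assign Var Val) (V : Var)
    (w : Assign Var Val) : Val V :=
  if V ∈ F.En then F.fn V w else s V

theorem mem_En_diff_Cn_iff {s : Assign Var Val} {V : Var} :
    V ∈ F.En \ Cn F ↔ ∃ w w', response F s V w ≠ response F s V w' := by
  constructor
  · rintro ⟨hE, hC⟩
    by_contra! h
    exact hC ⟨hE, fun w w' => by simpa [response, hE] using h w w'⟩
  · rintro ⟨w, w', hne⟩
    by_cases hE : V ∈ F.En
    · refine ⟨hE, fun hC => hne ?_⟩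
      simp [response, hE, hC.2 w w']
    · simp [response, hE] at hne

theorem sysEquiv_of_response_eq {s : Assign Var Val}
    (h : response F s = response G s) : sysEquiv F G := by
  have hess : F.En \ Cn F = G.En \ Cn G := by
    ext V
    rw [mem_En_diff_Cn_iff, mem_En_diff_Cn_iff, h]
  refine sysEquiv_iff.2 ⟨hess, fun V hV => funext fun w => ?_⟩
  have hVG := hess ▸ hV
  simpa [response, hV.1, hVG.1] using congrFun (congrFun h V) w

end Systems

section Intervention
variable [DecidableEq Var] {F G : FuncSystem Var Val} {X : Finset Var} {x s : Assign Var Val}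

theorem stepFn_iterate_apply_of_mem {V : Var} (hV : V ∈ X) {n : ℕ} (hn : n ≠ 0) :
    (stepFn F X x)^[n] s V = x V := by
  obtain ⟨m, rfl⟩ := Nat.exists_eq_succ_of_ne_zero hn
  simp [Function.iterate_succ_apply', stepFn, hV]

theorem stepFn_iterate_apply_of_not_mem {V : Var} (hX : V ∉ X) (hE : V ∉ F.En) (n : ℕ) :
    (stepFn F X x)^[n] s V = s V := by
  induction n with
  | zero => rfl
  | succ n ih => simp [Function.iterate_succ_apply', stepFn, hX, hE, ih]

theorem stepFn_apply_eq_of_not_mem (hs : Compat s F) {w : Assign Var Val}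
    (hw : ∀ W ∉ X, W ∉ F.En \ Cn F → w W = s W) {V : Var} (hX : V ∉ X)
    (hV : V ∉ F.En \ Cn F) : stepFn F X x w V = s V := by
  simp only [stepFn, if_neg hX]
  split_ifs with hE
  · have hC : V ∈ Cn F := by by_contra hC; exact hV ⟨hE, hC⟩
    rw [hC.2 w s, ← hs V hE]
  · exact hw V hX hV

theorem stepFn_iterate_congr (h : sysEquiv F G) (hF : Compat s F) (hG : Compat s G) (n : ℕ) :
    (stepFn F X x)^[n] s = (stepFn G X x)^[n] s ∧
      ∀ W ∉ X, W ∉ F.En \ Cn F → (stepFn F X x)^[n] s W = s W := by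
  induction n with
  | zero => exact ⟨rfl, fun _ _ _ => rfl⟩
  | succ n ih =>
    obtain ⟨ih_eq, ih_fix⟩ := ih
    obtain ⟨hess, hfn⟩ := sysEquiv_iff.1 h
    have ih_fixG : ∀ W ∉ X, W ∉ G.En \ Cn G → (stepFn G X x)^[n] s W = s W :=
      fun W hX hW => ih_eq ▸ ih_fix W hX (hess ▸ hW)
    simp only [Function.iterate_succ_apply']
    refine ⟨funext fun V => ?_, fun W hX hW => stepFn_apply_eq_of_not_mem hF ih_fix hX hW⟩
    by_cases hX : V ∈ X
    · simp [stepFn, hX]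
    by_cases hV : V ∈ F.En \ Cn F
    · have hVG : V ∈ G.En := (hess ▸ hV).1
      simp [stepFn, hX, hV.1, hVG, ih_eq, hfn V hV]
    · rw [stepFn_apply_eq_of_not_mem hF ih_fix hX hV,
        stepFn_apply_eq_of_not_mem hG ih_fixG hX (hess ▸ hV)]

theorem stepFn_iterate_succ_apply [Finite Var] (hF : RecursiveSys F) :
    ∀ n V, rank F V < n → (stepFn F X x)^[n + 1] s V = (stepFn F X x)^[n] s V := by
  intro n
  induction n with
  | zero => intro V h; omega
  | succ n ih =>
    intro V hV
    by_cases hX : V ∈ X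
    · rw [stepFn_iterate_apply_of_mem hX n.succ_ne_zero,
        stepFn_iterate_apply_of_mem hX (n + 1).succ_ne_zero]
    by_cases hE : V ∈ F.En
    · rw [Function.iterate_succ_apply' _ (n + 1)]
      conv_rhs => rw [Function.iterate_succ_apply']
      simp only [stepFn, if_neg hX, if_pos hE]
      exact F.dep_only V _ _ fun W hW => ih W (by have := rank_lt_rank hF ⟨hE, hW⟩; omega)
    · rw [stepFn_iterate_apply_of_not_mem hX hE, stepFn_iterate_apply_of_not_mem hX hE]

variable [Fintype Var]

theorem interveneAssign_erase_apply (F : FuncSystem Var Val) (w s : Assign Var Val) (V : Var) :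
    interveneAssign F (Finset.univ.erase V) w s V = response F s V w := by
  have hV : V ∉ Finset.univ.erase V := Finset.notMem_erase V _
  have hcard : Fintype.card Var ≠ 0 := (Fintype.card_pos_iff.2 ⟨V⟩).ne'
  rw [interveneAssign, Function.iterate_succ_apply', response]
  split_ifs with hE
  · simp only [stepFn, if_neg hV, if_pos hE]
    refine F.dep_only V _ _ fun W hW => stepFn_iterate_apply_of_mem ?_ hcard
    exact Finset.mem_erase.2 ⟨fun h => F.pa_ne V (h ▸ hW), Finset.mem_univ W⟩
  · simp only [stepFn, if_neg hV, if_neg hE]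
    exact stepFn_iterate_apply_of_not_mem hV hE _

theorem stepFn_interveneAssign (hF : RecursiveSys F) :
    stepFn F X x (interveneAssign F X x s) = interveneAssign F X x s := by
  funext V
  rw [interveneAssign, ← Function.iterate_succ_apply' (stepFn F X x)]
  refine stepFn_iterate_succ_apply hF _ V (Nat.lt_succ_of_le ?_)
  exact (Set.ncard_le_card _).trans Nat.card_eq_fintype_card.le

theorem compat_interveneAssign (hF : RecursiveSys F) :
    Compat (interveneAssign F X x s) (restrictSys F X) := fun V hV => by
  have hX : V ∉ X := fun h => hV.2 h
  conv_lhs => rw [← stepFn_interveneAssign hF]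
  simp [stepFn, hX, hV.1, restrictSys]

theorem interveneAssign_congr (h : sysEquiv F G) (hF : Compat s F) (hG : Compat s G) :
    interveneAssign F X x s = interveneAssign G X x s :=
  (stepFn_iterate_congr h hF hG _).1

end Intervention

section Teams

theorem sle_iff {S T : GCT Var Val} : sle S T ↔ ∀ p ∈ S, ∃ q ∈ T, pairEquiv p q := by
  constructor
  · rintro ⟨R, hSR, hRT⟩ ⟨s, G⟩ hp
    have hs : s ∈ {a | ∃ G', (a, G') ∈ S ∧ sysEquiv G' G} := ⟨G, hp, sysEquiv_refl G⟩
    rw [hSR G] at hs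
    obtain ⟨G', hq, hG'⟩ := hs
    exact ⟨(s, G'), hRT hq, rfl, hG'.symm⟩
  · intro h
    refine ⟨{q ∈ T | ∃ p ∈ S, pairEquiv p q}, fun F => ?_, Set.sep_subset _ _⟩
    ext s
    constructor
    · rintro ⟨G, hp, hGF⟩
      obtain ⟨⟨t, G'⟩, hq, rfl, hGG'⟩ := h _ hp
      exact ⟨G', ⟨hq, _, hp, rfl, hGG'⟩, hGG'.symm.trans hGF⟩
    · rintro ⟨G', ⟨-, ⟨t, G⟩, hp, rfl, hGG'⟩, hG'F⟩
      exact ⟨G, hp, hGG'.trans hG'F⟩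

theorem sle_of_subset {S T : GCT Var Val} (h : S ⊆ T) : sle S T :=
  ⟨S, fun _ => rfl, h⟩

theorem sle_of_gctEquiv {S T : GCT Var Val} (h : gctEquiv T S) : sle S T :=
  ⟨T, fun F => (h F).symm, subset_rfl⟩

theorem IsGCT.mono {S T : GCT Var Val} (hT : IsGCT T) (h : S ⊆ T) : IsGCT S :=
  fun p hp => hT p (h hp)

theorem exists_union_eq_sle {S T₁ T₂ : GCT Var Val} (h : sle S (T₁ ∪ T₂)) :
    ∃ S₁ S₂, S₁ ∪ S₂ = S ∧ sle S₁ T₁ ∧ sle S₂ T₂ := by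
  refine ⟨{p ∈ S | ∃ q ∈ T₁, pairEquiv p q}, {p ∈ S | ∃ q ∈ T₂, pairEquiv p q},
    ?_, sle_iff.2 fun _ hp => hp.2, sle_iff.2 fun _ hp => hp.2⟩
  ext p
  refine ⟨by rintro (hp | hp) <;> exact hp.1, fun hp => ?_⟩
  obtain ⟨q, hq | hq, hpq⟩ := sle_iff.1 h p hp
  exacts [Or.inl ⟨hp, q, hq, hpq⟩, Or.inr ⟨hp, q, hq, hpq⟩]

theorem mem_of_sle {K : Set (GCT Var Val)} (hK : ∀ T ∈ K, IsGCT T)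
    (hdown : ∀ T ∈ K, ∀ S : GCT Var Val, S ⊆ T → S ∈ K)
    (hequiv : ∀ T S : GCT Var Val, IsGCT T → IsGCT S → T ∈ K → gctEquiv T S → S ∈ K)
    {S T : GCT Var Val} (hS : IsGCT S) (hT : T ∈ K) (h : sle S T) : S ∈ K := by
  obtain ⟨R, hSR, hRT⟩ := h
  exact hequiv R S ((hK T hT).mono hRT) hS (hdown T hT R hRT) fun F => (hSR F).symm

end Teams

section Invariance
variable [DecidableEq Var] [Fintype Var]

theorem IsGCT.gIntervene {T : GCT Var Val} (hT : IsGCT T) (X : Finset Var) (x : Assign Var Val) :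
    IsGCT (gIntervene T X x) := by
  rintro _ ⟨p, hp, rfl⟩
  exact ⟨compat_interveneAssign (hT p hp).2, (hT p hp).2.restrictSys X⟩

theorem gIntervene_sle {S T : GCT Var Val} (hS : IsGCT S) (hT : IsGCT T) (h : sle S T)
    (X : Finset Var) (x : Assign Var Val) : sle (gIntervene S X x) (gIntervene T X x) := by
  rw [sle_iff] at h ⊢
  rintro _ ⟨⟨s, F⟩, hp, rfl⟩
  obtain ⟨⟨t, G⟩, hq, rfl, hFG⟩ := h _ hp
  refine ⟨_, ⟨(s, G), hq, rfl⟩, ?_, hFG.restrictSys X⟩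
  exact interveneAssign_congr hFG (hS _ hp).1 (hT _ hq).1

theorem gsat_of_sle (φ : Formula Var Val) {S T : GCT Var Val} (hS : IsGCT S) (hT : IsGCT T)
    (h : sle S T) (hφ : gsat T φ) : gsat S φ := by
  induction φ generalizing S T with
  | eq V v =>
    intro p hp
    obtain ⟨q, hq, hpq⟩ := sle_iff.1 h p hp
    rw [hpq.1]
    exact hφ q hq
  | dep Xs Y =>
    intro p hp p' hp' hXs
    obtain ⟨q, hq, hpq⟩ := sle_iff.1 h p hp
    obtain ⟨q', hq', hpq'⟩ := sle_iff.1 h p' hp'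
    rw [hpq.1, hpq'.1] at hXs ⊢
    exact hφ q hq q' hq' hXs
  | neg φ ih =>
    intro p hp hp'
    obtain ⟨q, hq, hpq⟩ := sle_iff.1 h p hp
    refine hφ q hq (ih (hT.mono (Set.singleton_subset_iff.2 hq))
      (hS.mono (Set.singleton_subset_iff.2 hp)) ?_ hp')
    exact sle_iff.2 fun _ hq' => ⟨p, rfl, hq' ▸ hpq.symm⟩
  | and φ ψ ihφ ihψ => exact ⟨ihφ hS hT h hφ.1, ihψ hS hT h hφ.2⟩
  | or φ ψ ihφ ihψ =>
    obtain ⟨T₁, T₂, rfl, h₁, h₂⟩ := hφ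
    obtain ⟨S₁, S₂, rfl, hS₁, hS₂⟩ := exists_union_eq_sle h
    exact ⟨S₁, S₂, rfl,
      ihφ (hS.mono Set.subset_union_left) (hT.mono Set.subset_union_left) hS₁ h₁,
      ihψ (hS.mono Set.subset_union_right) (hT.mono Set.subset_union_right) hS₂ h₂⟩
  | gor φ ψ ihφ ihψ => exact hφ.imp (ihφ hS hT h) (ihψ hS hT h)
  | cf X x φ ih =>
    exact ih (hS.gIntervene X x) (hT.gIntervene X x) (gIntervene_sle hS hT h X x) hφ

theorem closed_of_definable {K : Set (GCT Var Val)} (hK : ∀ T ∈ K, IsGCT T)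
    {φ : Formula Var Val} (hφ : ∀ T : GCT Var Val, IsGCT T → (T ∈ K ↔ gsat T φ)) :
    (∀ T ∈ K, ∀ S : GCT Var Val, S ⊆ T → S ∈ K) ∧
      (∀ T S : GCT Var Val, IsGCT T → IsGCT S → T ∈ K → gctEquiv T S → S ∈ K) := by
  refine ⟨fun T hT S hST => ?_, fun T S hT hS hTK hTS => ?_⟩
  · have hS := (hK T hT).mono hST
    exact (hφ S hS).2 (gsat_of_sle φ hS (hK T hT) (sle_of_subset hST) ((hφ T (hK T hT)).1 hT))
  · exact (hφ S hS).2 (gsat_of_sle φ hS hT (sle_of_gctEquiv hTS) ((hφ T hT).1 hTK))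

end Invariance

section Connectives
variable [Nonempty Var] [∀ V, Nonempty (Val V)]

structure IsFragment (P : Formula Var Val → Prop) : Prop where
  eq : ∀ V v, P (.eq V v)
  neg : ∀ φ, IsCO φ → P (.neg φ)
  and : ∀ {φ ψ}, P φ → P ψ → P (.and φ ψ)
  or : ∀ {φ ψ}, P φ → P ψ → P (.or φ ψ)
  cf : ∀ X x {φ}, P φ → P (.cf X x φ)

omit [Nonempty Var] [∀ V, Nonempty (Val V)] in
theorem isFragment_isCO : IsFragment (IsCO : Formula Var Val → Prop) :=
  ⟨fun _ _ => trivial, fun _ h => h, fun h₁ h₂ => ⟨h₁, h₂⟩, fun h₁ h₂ => ⟨h₁, h₂⟩,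
    fun _ _ _ h => h⟩

omit [Nonempty Var] [∀ V, Nonempty (Val V)] in
theorem isFragment_isCOD : IsFragment (IsCOD : Formula Var Val → Prop) :=
  ⟨fun _ _ => trivial, fun _ h => h, fun h₁ h₂ => ⟨h₁, h₂⟩, fun h₁ h₂ => ⟨h₁, h₂⟩,
    fun _ _ _ h => h⟩

omit [Nonempty Var] [∀ V, Nonempty (Val V)] in
theorem isFragment_isCOglobal : IsFragment (IsCOglobal : Formula Var Val → Prop) :=
  ⟨fun _ _ => trivial, fun _ h => h, fun h₁ h₂ => ⟨h₁, h₂⟩, fun h₁ h₂ => ⟨h₁, h₂⟩,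
    fun _ _ _ h => h⟩

theorem IsFragment.falsum {P : Formula Var Val → Prop} (hP : IsFragment P) : P falsum :=
  hP.and (hP.eq _ _) (hP.neg _ trivial)

theorem IsFragment.bigAnd {P : Formula Var Val → Prop} (hP : IsFragment P) :
    ∀ {l : List (Formula Var Val)}, (∀ φ ∈ l, P φ) → P (bigAnd l)
  | [], _ => hP.neg _ isFragment_isCO.falsum
  | [φ], h => h φ List.mem_cons_self
  | φ :: _ :: _, h =>
    hP.and (h φ List.mem_cons_self) (hP.bigAnd fun χ hχ => h χ (List.mem_cons_of_mem φ hχ))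

theorem isCOglobal_bigGor : ∀ {l : List (Formula Var Val)}, (∀ φ ∈ l, IsCOglobal φ) →
    IsCOglobal (bigGor l)
  | [], _ => isFragment_isCOglobal.falsum
  | [φ], h => h φ List.mem_cons_self
  | φ :: _ :: _, h =>
    ⟨h φ List.mem_cons_self,
      isCOglobal_bigGor fun χ hχ => h χ (List.mem_cons_of_mem φ hχ)⟩

/-- The constancy atom `=(V)` as the global disjunction `⤘_v V = v`. -/
noncomputable def gorConst [∀ V, Fintype (Val V)] (V : Var) : Formula Var Val :=
  bigGor ((Finset.univ : Finset (Val V)).toList.map (.eq V))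

theorem isCOglobal_gorConst [∀ V, Fintype (Val V)] (V : Var) :
    IsCOglobal (gorConst V : Formula Var Val) :=
  isCOglobal_bigGor fun _ hφ => by
    obtain ⟨v, -, rfl⟩ := List.mem_map.1 hφ
    trivial

noncomputable def tensorPow (φ : Formula Var Val) : ℕ → Formula Var Val
  | 0 => falsum
  | k + 1 => .or φ (tensorPow φ k)

theorem IsFragment.tensorPow {P : Formula Var Val → Prop} (hP : IsFragment P)
    {φ : Formula Var Val} (hφ : P φ) : ∀ k, P (tensorPow φ k)
  | 0 => hP.falsum
  | k + 1 => hP.or hφ (hP.tensorPow hφ k)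

variable [DecidableEq Var] [Fintype Var]

theorem gsat_falsum {T : GCT Var Val} : gsat T falsum ↔ T = ∅ := by
  refine ⟨fun ⟨h₁, h₂⟩ => Set.eq_empty_of_forall_notMem fun p hp => h₂ p hp ?_, ?_⟩
  · rintro _ rfl
    exact h₁ _ hp
  · rintro rfl
    exact ⟨fun _ h => h.elim, fun _ h => h.elim⟩

theorem gsat_bigAnd {T : GCT Var Val} :
    ∀ {l : List (Formula Var Val)}, gsat T (bigAnd l) ↔ ∀ φ ∈ l, gsat T φ
  | [] => by
    simp only [bigAnd, List.not_mem_nil, IsEmpty.forall_iff, imp_true_iff, iff_true]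
    exact fun p _ h => Set.singleton_ne_empty p (gsat_falsum.1 h)
  | [φ] => by simp [bigAnd]
  | φ :: ψ :: l => by
    change gsat T φ ∧ gsat T (bigAnd (ψ :: l)) ↔ _
    rw [List.forall_mem_cons, gsat_bigAnd]

theorem gsat_bigGor {T : GCT Var Val} :
    ∀ {l : List (Formula Var Val)}, l ≠ [] → (gsat T (bigGor l) ↔ ∃ φ ∈ l, gsat T φ)
  | [], h => absurd rfl h
  | [φ], _ => by simp [bigGor]
  | φ :: ψ :: l, _ => by
    change gsat T φ ∨ gsat T (bigGor (ψ :: l)) ↔ _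
    rw [List.exists_mem_cons_iff, gsat_bigGor (List.cons_ne_nil ψ l)]

end Connectives

section Constancy
variable [DecidableEq Var] [Fintype Var]

def DefinesConstancy (con : Var → Formula Var Val) : Prop :=
  ∀ (U : GCT Var Val) (V : Var), gsat U (con V) ↔ ∀ p ∈ U, ∀ q ∈ U, p.1 V = q.1 V

theorem definesConstancy_conAtom : DefinesConstancy (conAtom : Var → Formula Var Val) :=
  fun _ _ => by simp [conAtom, gsat]

variable [Nonempty Var] [∀ V, Fintype (Val V)] [∀ V, Nonempty (Val V)]

theorem definesConstancy_gorConst : DefinesConstancy (gorConst : Var → Formula Var Val) := by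
  intro U V
  rw [gorConst, gsat_bigGor (by simp [Finset.univ_nonempty.ne_empty])]
  simp only [List.mem_map, Finset.mem_toList, Finset.mem_univ, true_and, exists_exists_eq_and,
    gsat]
  refine ⟨fun ⟨v, hv⟩ p hp q hq => (hv p hp).trans (hv q hq).symm, fun h => ?_⟩
  rcases U.eq_empty_or_nonempty with rfl | ⟨p₀, hp₀⟩
  · exact ⟨Classical.arbitrary _, fun _ h => h.elim⟩
  · exact ⟨p₀.1 V, fun q hq => h q hq p₀ hp₀⟩

end Constancy

section Signature
variable [DecidableEq Var] [Fintype Var]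

/-- A probe either reads a variable `V` directly or reads it after intervening on all other
variables with `w`. -/
abbrev Probe (Var : Type) (Val : Var → Type) : Type := Var × Option (Assign Var Val)

abbrev Signature (Var : Type) (Val : Var → Type) : Type := (i : Probe Var Val) → Val i.1

noncomputable def probe : Probe Var Val →
    Assign Var Val × FuncSystem Var Val → Assign Var Val × FuncSystem Var Val
  | (_, none), p => p
  | (V, some w), p => (interveneAssign p.2 (Finset.univ.erase V) w p.1,
      restrictSys p.2 (Finset.univ.erase V))

def underProbe : Probe Var Val → Formula Var Val → Formula Var Val
  | (_, none), φ => φ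
  | (V, some w), φ => .cf (Finset.univ.erase V) w φ

theorem IsFragment.underProbe {P : Formula Var Val → Prop} (hP : IsFragment P) (i : Probe Var Val)
    {φ : Formula Var Val} (hφ : P φ) : P (underProbe i φ) := by
  obtain ⟨V, _ | w⟩ := i
  exacts [hφ, hP.cf _ _ hφ]

theorem gsat_underProbe (i : Probe Var Val) (T : GCT Var Val) (φ : Formula Var Val) :
    gsat T (underProbe i φ) ↔ gsat (probe i '' T) φ := by
  obtain ⟨V, _ | w⟩ := i
  · change gsat T φ ↔ gsat (id '' T) φ
    rw [Set.image_id]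
  · rfl

noncomputable def signature (p : Assign Var Val × FuncSystem Var Val) : Signature Var Val :=
  fun i => (probe i p).1 i.1

theorem signature_some (p : Assign Var Val × FuncSystem Var Val) (V : Var) (w : Assign Var Val) :
    signature p (V, some w) = response p.2 p.1 V w :=
  interveneAssign_erase_apply p.2 w p.1 V

theorem pairEquiv_of_signature_eq {p q : Assign Var Val × FuncSystem Var Val}
    (h : signature p = signature q) : pairEquiv p q := by
  have hpq : p.1 = q.1 := funext fun V => congrFun h (V, none)
  refine ⟨hpq, sysEquiv_of_response_eq (s := p.1) (funext₂ fun V w => ?_)⟩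
  simpa only [signature_some, hpq] using congrFun h (V, some w)

theorem gsat_underProbe_eq {T : GCT Var Val} {i : Probe Var Val} {v : Val i.1} :
    gsat T (underProbe i (.eq i.1 v)) ↔ ∀ p ∈ T, signature p i = v := by
  rw [gsat_underProbe]
  exact Set.forall_mem_image

theorem gsat_underProbe_con {con : Var → Formula Var Val} (hcon : DefinesConstancy con)
    {T : GCT Var Val} {i : Probe Var Val} :
    gsat T (underProbe i (con i.1)) ↔
      ∀ p ∈ T, ∀ q ∈ T, signature p i = signature q i := by
  rw [gsat_underProbe, hcon]
  simp only [Set.forall_mem_image, signature]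

end Signature

section Counting
variable [DecidableEq Var] [Fintype Var] [Nonempty Var] [∀ V, Nonempty (Val V)]
  {β : Type} [Finite β] {f : Assign Var Val × FuncSystem Var Val → β}

theorem gsat_tensorPow {φ : Formula Var Val}
    (hφ : ∀ U : GCT Var Val, gsat U φ ↔ ∀ p ∈ U, ∀ q ∈ U, f p = f q)
    (k : ℕ) (T : GCT Var Val) :
    gsat T (tensorPow φ k) ↔ (f '' T).ncard ≤ k := by
  induction k generalizing T with
  | zero => simp [tensorPow, gsat_falsum, Set.ncard_eq_zero (Set.toFinite (f '' T))]
  | succ k ih =>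
    constructor
    · rintro ⟨T₁, T₂, rfl, h₁, h₂⟩
      have hT₁ : (f '' T₁).ncard ≤ 1 := by
        rw [Set.ncard_le_one]
        rintro _ ⟨p, hp, rfl⟩ _ ⟨q, hq, rfl⟩
        exact (hφ T₁).1 h₁ p hp q hq
      rw [Set.image_union]
      exact (Set.ncard_union_le _ _).trans (by rw [ih] at h₂; omega)
    · intro h
      rcases T.eq_empty_or_nonempty with rfl | ⟨p₀, hp₀⟩
      · exact ⟨∅, ∅, Set.union_self ∅, (hφ ∅).2 (by simp), (ih ∅).2 (by simp)⟩
      refine ⟨{p ∈ T | f p = f p₀}, T \ {p ∈ T | f p = f p₀},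
        Set.union_sdiff_cancel (Set.sep_subset _ _),
        (hφ _).2 fun p hp q hq => hp.2.trans hq.2.symm, (ih _).2 ?_⟩
      have hsub : f '' (T \ {p ∈ T | f p = f p₀}) ⊆ f '' T \ {f p₀} := by
        rintro _ ⟨p, ⟨hp, hp₀'⟩, rfl⟩
        exact ⟨⟨p, hp, rfl⟩, fun h => hp₀' ⟨hp, h⟩⟩
      have := Set.ncard_sdiff_singleton_of_mem (Set.mem_image_of_mem f hp₀)
      have := Set.ncard_le_ncard hsub
      omega

/-- The team splits into a part where `f` takes fewer than `card B` values and a part where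
`f` avoids `B`. -/
noncomputable def missForm (χ : Formula Var Val) (δ : β → Formula Var Val) (B : Finset β) :
    Formula Var Val :=
  .or (tensorPow χ (B.card - 1)) (bigAnd (B.toList.map fun b => .neg (δ b)))

theorem gsat_missForm {χ : Formula Var Val} {δ : β → Formula Var Val}
    (hχ : ∀ U : GCT Var Val, gsat U χ ↔ ∀ p ∈ U, ∀ q ∈ U, f p = f q)
    (hδ : ∀ b p, gsat {p} (δ b) ↔ f p = b) {B : Finset β} (hB : B.Nonempty)
    (T : GCT Var Val) :
    gsat T (missForm χ δ B) ↔ ¬ ↑B ⊆ f '' T := by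
  have hpos := hB.card_pos
  have gsat_avoid : ∀ U : GCT Var Val,
      gsat U (bigAnd (B.toList.map fun b => .neg (δ b))) ↔ ∀ p ∈ U, f p ∉ B := by
    intro U
    simp only [gsat_bigAnd, List.forall_mem_map, Finset.mem_toList, gsat, hδ]
    exact ⟨fun h p hp hpB => h _ hpB p hp rfl, fun h b hb p hp hpb => h p hp (hpb ▸ hb)⟩
  simp only [missForm, gsat, gsat_tensorPow hχ, gsat_avoid]
  constructor
  · rintro ⟨T₁, T₂, rfl, h₁, h₂⟩ hsub
    have hBT₁ : ↑B ⊆ f '' T₁ := by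
      intro b hb
      obtain ⟨p, hp | hp, rfl⟩ := hsub hb
      exacts [⟨p, hp, rfl⟩, (h₂ p hp hb).elim]
    have := Set.ncard_le_ncard hBT₁
    rw [Set.ncard_coe_finset] at this
    omega
  · intro hnot
    obtain ⟨b₀, hb₀, hb₀T⟩ := Set.not_subset.1 hnot
    refine ⟨{p ∈ T | f p ∈ B}, T \ {p ∈ T | f p ∈ B},
      Set.union_sdiff_cancel (Set.sep_subset _ _), ?_, fun p hp hpB => hp.2 ⟨hp.1, hpB⟩⟩
    have hsub : f '' {p ∈ T | f p ∈ B} ⊆ ↑(B.erase b₀) := by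
      rintro _ ⟨p, ⟨hp, hpB⟩, rfl⟩
      exact Finset.mem_erase.2 ⟨fun h => hb₀T ⟨p, hp, h⟩, hpB⟩
    have := Set.ncard_le_ncard hsub
    rwa [Set.ncard_coe_finset, Finset.card_erase_of_mem hb₀] at this

end Counting

section Definability
variable [DecidableEq Var] [Fintype Var] [Nonempty Var] [∀ V, Fintype (Val V)]
  [∀ V, Nonempty (Val V)]

noncomputable def sigForm (σ : Signature Var Val) : Formula Var Val :=
  bigAnd ((Finset.univ : Finset (Probe Var Val)).toList.map fun i =>
    underProbe i (.eq i.1 (σ i)))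

noncomputable def sameSigForm (con : Var → Formula Var Val) : Formula Var Val :=
  bigAnd ((Finset.univ : Finset (Probe Var Val)).toList.map fun i => underProbe i (con i.1))

theorem gsat_sigForm {σ : Signature Var Val} {T : GCT Var Val} :
    gsat T (sigForm σ) ↔ ∀ p ∈ T, signature p = σ := by
  simp only [sigForm, gsat_bigAnd, List.forall_mem_map, Finset.mem_toList, Finset.mem_univ,
    true_implies, gsat_underProbe_eq, funext_iff]
  exact ⟨fun h p hp i => h i p hp, fun h i p hp => h p hp i⟩

theorem gsat_sameSigForm {con : Var → Formula Var Val} (hcon : DefinesConstancy con)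
    (T : GCT Var Val) :
    gsat T (sameSigForm con) ↔ ∀ p ∈ T, ∀ q ∈ T, signature p = signature q := by
  simp only [sameSigForm, gsat_bigAnd, List.forall_mem_map, Finset.mem_toList, Finset.mem_univ,
    true_implies, gsat_underProbe_con hcon, funext_iff]
  exact ⟨fun h p hp q hq i => h i p hp q hq, fun h i p hp q hq => h p hp q hq i⟩

noncomputable def definingForm (con : Var → Formula Var Val) (K : Set (GCT Var Val)) :
    Formula Var Val :=
  bigAnd (((Finset.univ : Finset (Finset (Signature Var Val))).filter
    fun B => ∀ T ∈ K, ¬ ↑B ⊆ signature '' T).toList.map (missForm (sameSigForm con) sigForm))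

theorem IsFragment.definingForm {P : Formula Var Val → Prop} (hP : IsFragment P)
    {con : Var → Formula Var Val} (hcon : ∀ V, P (con V)) (K : Set (GCT Var Val)) :
    P (definingForm con K) := by
  have hsig : ∀ σ, IsCO (sigForm σ : Formula Var Val) := fun σ =>
    isFragment_isCO.bigAnd fun _ hφ => by
      obtain ⟨i, -, rfl⟩ := List.mem_map.1 hφ
      exact isFragment_isCO.underProbe i (isFragment_isCO.eq _ _)
  refine hP.bigAnd fun _ hφ => ?_
  obtain ⟨B, -, rfl⟩ := List.mem_map.1 hφ
  refine hP.or (hP.tensorPow (hP.bigAnd fun _ hφ => ?_) _) (hP.bigAnd fun _ hφ => ?_)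
  · obtain ⟨i, -, rfl⟩ := List.mem_map.1 hφ
    exact hP.underProbe i (hcon _)
  · obtain ⟨σ, -, rfl⟩ := List.mem_map.1 hφ
    exact hP.neg _ (hsig σ)

theorem mem_iff_gsat_definingForm {con : Var → Formula Var Val} (hcon : DefinesConstancy con)
    {K : Set (GCT Var Val)} (hK : ∀ T ∈ K, IsGCT T) (hne : K.Nonempty)
    (hdown : ∀ T ∈ K, ∀ S : GCT Var Val, S ⊆ T → S ∈ K)
    (hequiv : ∀ T S : GCT Var Val, IsGCT T → IsGCT S → T ∈ K → gctEquiv T S → S ∈ K)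
    {T : GCT Var Val} (hT : IsGCT T) : T ∈ K ↔ gsat T (definingForm con K) := by
  have hmiss : ∀ B : Finset (Signature Var Val), (∀ T ∈ K, ¬ ↑B ⊆ signature '' T) →
      (gsat T (missForm (sameSigForm con) sigForm B) ↔ ¬ ↑B ⊆ signature '' T) := by
    intro B hB
    refine gsat_missForm (gsat_sameSigForm hcon) (fun σ p => by simp [gsat_sigForm]) ?_ T
    obtain ⟨T₀, hT₀⟩ := hne
    exact Finset.nonempty_iff_ne_empty.2 fun h => hB T₀ hT₀ (by simp [h])
  simp only [definingForm, gsat_bigAnd, List.forall_mem_map, Finset.mem_toList,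
    Finset.mem_filter, Finset.mem_univ, true_and]
  refine ⟨fun hTK B hB => (hmiss B hB).2 (hB T hTK), fun h => ?_⟩
  obtain ⟨T', hT'K, hsub⟩ : ∃ T' ∈ K, signature '' T ⊆ signature '' T' := by
    by_contra! hB
    set B := (Set.toFinite (signature '' T)).toFinset
    have hB' : ∀ T' ∈ K, ¬ ↑B ⊆ signature '' T' := by
      simpa only [B, Set.Finite.coe_toFinset] using hB
    exact (hmiss B hB').1 (h B hB') (Set.Finite.coe_toFinset _).le
  refine mem_of_sle hK hdown hequiv hT hT'K (sle_iff.2 fun p hp => ?_)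
  obtain ⟨q, hq, hqp⟩ := hsub ⟨p, hp, rfl⟩
  exact ⟨q, hq, pairEquiv_of_signature_eq hqp.symm⟩

end Definability

/-- expressive completeness of COD (equivalently CO_⤘) over generalized
causal teams: a nonempty class of generalized causal teams is definable by a COD-formula
(equivalently by a CO_⤘-formula) iff it is causally downward closed and closed under
equivalence ≈. -/
theorem cod_expressive_completeness {Var : Type} [Fintype Var] [DecidableEq Var] [Nonempty Var]
    {Val : Var → Type} [∀ V, Fintype (Val V)] [∀ V, Nonempty (Val V)]
    (K : Set (GCT Var Val)) (hK : ∀ T ∈ K, IsGCT T) (hne : K.Nonempty) :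
    ((∃ φ : Formula Var Val, IsCOD φ ∧
        ∀ T : GCT Var Val, IsGCT T → (T ∈ K ↔ gsat T φ)) ↔
      ((∀ T ∈ K, ∀ S : GCT Var Val, S ⊆ T → S ∈ K) ∧
       (∀ T S : GCT Var Val, IsGCT T → IsGCT S → T ∈ K → gctEquiv T S → S ∈ K))) ∧
    ((∃ φ : Formula Var Val, IsCOglobal φ ∧
        ∀ T : GCT Var Val, IsGCT T → (T ∈ K ↔ gsat T φ)) ↔
      ((∀ T ∈ K, ∀ S : GCT Var Val, S ⊆ T → S ∈ K) ∧
       (∀ T S : GCT Var Val, IsGCT T → IsGCT S → T ∈ K → gctEquiv T S → S ∈ K))) := by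
  refine ⟨⟨fun ⟨_, _, hφ⟩ => closed_of_definable hK hφ, fun ⟨hdown, hequiv⟩ => ?_⟩,
    ⟨fun ⟨_, _, hφ⟩ => closed_of_definable hK hφ, fun ⟨hdown, hequiv⟩ => ?_⟩⟩
  · exact ⟨definingForm conAtom K,
      isFragment_isCOD.definingForm (con := conAtom) (fun _ => trivial) K,
      fun T hT => mem_iff_gsat_definingForm definesConstancy_conAtom hK hne hdown hequiv hT⟩
  · exact ⟨definingForm gorConst K, isFragment_isCOglobal.definingForm isCOglobal_gorConst K,
      fun T hT => mem_iff_gsat_definingForm definesConstancy_gorConst hK hne hdown hequiv hT⟩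

end CausalTeams
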